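/- arXiv:2505.04048 — 4 statements merged into one kernel-verified Lean document; each statement's English description precedes it below -/
import Mathlib

section
/- Let G be a bipartite simple graph on a finite vertex set V = X ⊔ Y with |X| = |Y| = n, and let c₁, c₂ : E(G) → ℝ be two cost functions. Suppose r ∈ E(G) is an edge with {e ∈ E(G) : c₁(e) ≤ c₁(r)} = {e ∈ E(G) : c₂(e) ≤ c₂(r)}; call Γ the spanning subgraph with this common edge set. If Γ has a perfect matching while Γ with the edge r deleted has no perfect matching, then d_B(G, c₁) = c₁(r) and d_B(G, c₂) = c₂(r); in particular, the edge realizing the bottleneck cost is the same edge r for both cost functions. -/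
/-- `M` is a perfect matching (given as a set of edges): every vertex of `V`
lies in exactly one edge of `M`. -/
def IsPerfectMatchingES {V : Type} (M : Set (Sym2 V)) : Prop :=
  ∀ v : V, ∃! e, e ∈ M ∧ v ∈ e

/-- The spanning subgraph with edge set `S` has a perfect matching. -/
def HasPerfectMatchingES {V : Type} (S : Set (Sym2 V)) : Prop :=
  ∃ M ⊆ S, IsPerfectMatchingES M

/-- The edge set of the threshold subgraph `G_λ = {e ∈ E(G) : c e ≤ λ}`. -/
def thresholdEdges {V : Type} (G : SimpleGraph V) (c : Sym2 V → ℝ) (lam : ℝ) :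
    Set (Sym2 V) :=
  {e | e ∈ G.edgeSet ∧ c e ≤ lam}

theorem HasPerfectMatchingES.mono {V : Type} {S T : Set (Sym2 V)} (hST : S ⊆ T)
    (hS : HasPerfectMatchingES S) : HasPerfectMatchingES T :=
  let ⟨M, hMS, hM⟩ := hS
  ⟨M, hMS.trans hST, hM⟩

theorem mem_of_isPerfectMatchingES_of_not_hasPerfectMatchingES_diff {V : Type}
    {S M : Set (Sym2 V)} {r : Sym2 V} (hMS : M ⊆ S) (hM : IsPerfectMatchingES M)
    (hnopm : ¬ HasPerfectMatchingES (S \ {r})) : r ∈ M := by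
  by_contra hrM
  exact hnopm ⟨M, fun e he => ⟨hMS he, fun her => hrM (her ▸ he)⟩, hM⟩

section Threshold

variable {V : Type} (G : SimpleGraph V) (c : Sym2 V → ℝ)

theorem thresholdEdges_subset_diff_of_lt {lam : ℝ} {r : Sym2 V} (hlam : lam < c r) :
    thresholdEdges G c lam ⊆ thresholdEdges G c (c r) \ {r} := by
  rintro e ⟨heG, hce⟩
  refine ⟨⟨heG, hce.trans hlam.le⟩, ?_⟩
  rintro rfl
  exact (hce.trans_lt hlam).false

theorem isLeast_bottleneck_of_critical {r : Sym2 V}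
    (hpm : HasPerfectMatchingES (thresholdEdges G c (c r)))
    (hnopm : ¬ HasPerfectMatchingES (thresholdEdges G c (c r) \ {r})) :
    IsLeast {lam : ℝ | HasPerfectMatchingES (thresholdEdges G c lam)} (c r) := by
  refine ⟨hpm, fun lam hlam => ?_⟩
  by_contra! hlt
  exact hnopm (hlam.mono (thresholdEdges_subset_diff_of_lt G c hlt))

end Threshold

theorem stmt1_general {V : Type}
    (G : SimpleGraph V)
    (c₁ c₂ : Sym2 V → ℝ) (r : Sym2 V)
    (Γ : Set (Sym2 V))
    (hΓ₁ : Γ = thresholdEdges G c₁ (c₁ r))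
    (hΓ₂ : Γ = thresholdEdges G c₂ (c₂ r))
    (hpm : HasPerfectMatchingES Γ)
    (hnopm : ¬ HasPerfectMatchingES (Γ \ {r})) :
    IsLeast {lam : ℝ | HasPerfectMatchingES (thresholdEdges G c₁ lam)} (c₁ r) ∧
    IsLeast {lam : ℝ | HasPerfectMatchingES (thresholdEdges G c₂ lam)} (c₂ r) ∧
    (∀ M ⊆ Γ, IsPerfectMatchingES M → r ∈ M) :=
  ⟨isLeast_bottleneck_of_critical G c₁ (hΓ₁ ▸ hpm) (hΓ₁ ▸ hnopm),
    isLeast_bottleneck_of_critical G c₂ (hΓ₂ ▸ hpm) (hΓ₂ ▸ hnopm),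
    fun _ hMΓ hM => mem_of_isPerfectMatchingES_of_not_hasPerfectMatchingES_diff hMΓ hM hnopm⟩

/-- internal-event lemma. Suppose the two cost functions `c₁, c₂` induce
the same threshold subgraph `Γ` at the respective costs of an edge `r`, that `Γ` has a
perfect matching, and that `Γ` with `r` deleted has none. Then the bottleneck cost for `c₁`
is `c₁(r)` and the bottleneck cost for `c₂` is `c₂(r)`; in particular, the bottleneck edge
is the same edge `r` for both cost functions (every perfect matching of `Γ` contains `r`). -/
theorem stmt1 {V : Type} [Fintype V] [DecidableEq V]
    (X Y : Finset V) (n : ℕ)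
    (hdisj : Disjoint X Y) (hcover : X ∪ Y = Finset.univ)
    (hXcard : X.card = n) (hYcard : Y.card = n)
    (G : SimpleGraph V)
    (hbip : ∀ u v : V, G.Adj u v → (u ∈ X ∧ v ∈ Y) ∨ (u ∈ Y ∧ v ∈ X))
    (c₁ c₂ : Sym2 V → ℝ) (r : Sym2 V) (hr : r ∈ G.edgeSet)
    (Γ : Set (Sym2 V))
    (hΓ₁ : Γ = thresholdEdges G c₁ (c₁ r))
    (hΓ₂ : Γ = thresholdEdges G c₂ (c₂ r))
    (hpm : HasPerfectMatchingES Γ)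
    (hnopm : ¬ HasPerfectMatchingES (Γ \ {r})) :
    IsLeast {lam : ℝ | HasPerfectMatchingES (thresholdEdges G c₁ lam)} (c₁ r) ∧
    IsLeast {lam : ℝ | HasPerfectMatchingES (thresholdEdges G c₂ lam)} (c₂ r) ∧
    (∀ M ⊆ Γ, IsPerfectMatchingES M → r ∈ M) :=
  stmt1_general G c₁ c₂ r Γ hΓ₁ hΓ₂ hpm hnopm
end

section
/- Let G be a bipartite simple graph on a finite vertex set V = X ⊔ Y with |X| = |Y| = n, and let c₁, c₂ : E(G) → ℝ be two cost functions. Let Γ = {e' ∈ E(G) : c₁(e') ≤ c₁(r)} for an edge r, let M ⊆ Γ be a perfect matching of the subgraph with edge set Γ with r ∈ M, and suppose the subgraph with edge set Γ \ {r} has no perfect matching. Let e ∈ M with e ≠ r, and suppose {e' ∈ E(G) : c₂(e') ≤ c₂(r)} = Γ \ {e} and {e' ∈ E(G) : c₂(e') ≤ c₂(e)} = Γ. Then exactly one of the following holds: (1) the subgraph with edge set Γ \ {e} has a perfect matching, and then d_B(G, c₂) = c₂(r); or (2) the subgraph with edge set Γ \ {e} has no perfect matching, and then d_B(G, c₂)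 = c₂(e). -/
theorem thresholdEdges_subset_diff_singleton_of_lt {V : Type} {G : SimpleGraph V}
    {c : Sym2 V → ℝ} {f : Sym2 V} {lam : ℝ} (hlam : lam < c f) :
    thresholdEdges G c lam ⊆ thresholdEdges G c (c f) \ {f} := by
  rintro x ⟨hxG, hxc⟩
  refine ⟨⟨hxG, hxc.trans hlam.le⟩, ?_⟩
  rintro rfl
  exact hlam.not_ge hxc

theorem isLeast_thresholdEdges_of_critical {V : Type} {G : SimpleGraph V}
    {c : Sym2 V → ℝ} {f : Sym2 V}
    (hpm : HasPerfectMatchingES (thresholdEdges G c (c f)))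
    (hcrit : ¬ HasPerfectMatchingES (thresholdEdges G c (c f) \ {f})) :
    IsLeast {lam : ℝ | HasPerfectMatchingES (thresholdEdges G c lam)} (c f) :=
  ⟨hpm, fun _ hlam => le_of_not_gt fun hlt =>
    hcrit (hlam.mono (thresholdEdges_subset_diff_singleton_of_lt hlt))⟩

theorem stmt3_general {V : Type}
    (G : SimpleGraph V)
    (c₂ : Sym2 V → ℝ) (r e : Sym2 V)
    (Γ : Set (Sym2 V))
    (M : Set (Sym2 V)) (hMΓ : M ⊆ Γ) (hMpm : IsPerfectMatchingES M)
    (hnopm : ¬ HasPerfectMatchingES (Γ \ {r}))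
    (h2r : thresholdEdges G c₂ (c₂ r) = Γ \ {e})
    (h2e : thresholdEdges G c₂ (c₂ e) = Γ) :
    (HasPerfectMatchingES (Γ \ {e}) →
      IsLeast {lam : ℝ | HasPerfectMatchingES (thresholdEdges G c₂ lam)} (c₂ r)) ∧
    (¬ HasPerfectMatchingES (Γ \ {e}) →
      IsLeast {lam : ℝ | HasPerfectMatchingES (thresholdEdges G c₂ lam)} (c₂ e)) := by
  constructor
  · intro hpm
    refine isLeast_thresholdEdges_of_critical (h2r ▸ hpm) ?_
    rw [h2r]
    exact fun h => hnopm (h.mono (Set.sdiff_subset_sdiff_left Set.sdiff_subset))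
  · intro hnpm
    exact isLeast_thresholdEdges_of_critical (h2e ▸ ⟨M, hMΓ, hMpm⟩) (h2e ▸ hnpm)

/-- M-Event lemma. Let `Γ` be the threshold edge set of `c₁` at `c₁ r`,
let `M ⊆ Γ` be a perfect matching with `r ∈ M` such that `Γ \ {r}` has no perfect matching,
and let `e ∈ M`, `e ≠ r`, where the new cost `c₂` satisfies: the threshold edge set at
`c₂ r` is `Γ \ {e}` and the threshold edge set at `c₂ e` is `Γ`. Then exactly one of:
(1) `Γ \ {e}` has a perfect matching, and then the bottleneck cost for `c₂` is `c₂ r`; or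
(2) `Γ \ {e}` has no perfect matching, and then the bottleneck cost for `c₂` is `c₂ e`. -/
theorem stmt3 {V : Type} [Fintype V] [DecidableEq V]
    (X Y : Finset V) (n : ℕ)
    (hdisj : Disjoint X Y) (hcover : X ∪ Y = Finset.univ)
    (hXcard : X.card = n) (hYcard : Y.card = n)
    (G : SimpleGraph V)
    (hbip : ∀ u v : V, G.Adj u v → (u ∈ X ∧ v ∈ Y) ∨ (u ∈ Y ∧ v ∈ X))
    (c₁ c₂ : Sym2 V → ℝ) (r e : Sym2 V)
    (Γ : Set (Sym2 V)) (hΓ : Γ = thresholdEdges G c₁ (c₁ r))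
    (M : Set (Sym2 V)) (hMΓ : M ⊆ Γ) (hMpm : IsPerfectMatchingES M) (hrM : r ∈ M)
    (hnopm : ¬ HasPerfectMatchingES (Γ \ {r}))
    (heM : e ∈ M) (her : e ≠ r)
    (h2r : thresholdEdges G c₂ (c₂ r) = Γ \ {e})
    (h2e : thresholdEdges G c₂ (c₂ e) = Γ) :
    (HasPerfectMatchingES (Γ \ {e}) →
      IsLeast {lam : ℝ | HasPerfectMatchingES (thresholdEdges G c₂ lam)} (c₂ r)) ∧
    (¬ HasPerfectMatchingES (Γ \ {e}) →
      IsLeast {lam : ℝ | HasPerfectMatchingES (thresholdEdges G c₂ lam)} (c₂ e)) :=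
  stmt3_general G c₂ r e Γ M hMΓ hMpm hnopm h2r h2e
end

section
/- Let X and Y be finite sets of points in ℝ² lying strictly above the diagonal Δ = {(t,t) : t ∈ ℝ} (i.e., z₂ > z₁ for every point z = (z₁, z₂)). For z = (z₁, z₂), let z' = ((z₁+z₂)/2, (z₁+z₂)/2) denote its orthogonal projection onto Δ, and let X̄, Ȳ be the sets of projections of points of X, Y respectively. Define the complete bipartite graph G on U ⊔ V with U = X ⊔ Ȳ and V = Y ⊔ X̄, with edge costs c(uv) = ‖u − v‖_∞ if u ∈ X or v ∈ Y, and c(uv) = 0 if u ∈ Ȳ and v ∈ X̄. Then the bottleneck cost d_B(G) (the least λ such that the subgraph of edges of cost at most λ has a perfect matching) equals the bottleneck distance d_B(X, Y) = min over partial matchings η : X ⇌ Y of c(η). -/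
/-!
Both bottleneck quantities are least elements of sets of admissible thresholds `λ`, and these
sets coincide. A perfect matching of the graph restricts, on the edges `X → Y`, to a partial
matching; every other edge at a point `z` of `X` or `Y` joins `z` to a point of the diagonal, so
it costs at least `(z₂ - z₁)/2`. Conversely a partial matching extends to a perfect matching by
sending each unmatched point to its own projection, at cost exactly `(z₂ - z₁)/2`, and the
remaining points of `Ȳ` to those of `X̄` at cost `0`. The least threshold exists because the
admissible thresholds form a finite union of closed half-lines.
-/

/-- Orthogonal projection of a point of the plane onto the diagonal `Δ = {(t,t)}`. -/
noncomputable def diagProj (z : ℝ × ℝ) : ℝ × ℝ := ((z.1 + z.2) / 2, (z.1 + z.2) / 2)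

/-- The edge costs of the complete bipartite graph on `U ⊔ V`, `U = X ⊔ Ȳ`, `V = Y ⊔ X̄`:
`c(uv) = ‖u − v‖_∞` if `u ∈ X` or `v ∈ Y`, and `c(uv) = 0` if `u ∈ Ȳ` and `v ∈ X̄`.
(Note that the norm on `ℝ × ℝ` is the sup-norm.) -/
noncomputable def bipCost (X Y : Finset (ℝ × ℝ)) :
    ({x // x ∈ X} ⊕ {y // y ∈ Y}) → ({y // y ∈ Y} ⊕ {x // x ∈ X}) → ℝ
  | Sum.inl x, Sum.inl y => ‖(x : ℝ × ℝ) - (y : ℝ × ℝ)‖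
  | Sum.inl x, Sum.inr x' => ‖(x : ℝ × ℝ) - diagProj (x' : ℝ × ℝ)‖
  | Sum.inr y', Sum.inl y => ‖diagProj (y' : ℝ × ℝ) - (y : ℝ × ℝ)‖
  | Sum.inr _, Sum.inr _ => 0

namespace PEquiv

variable {α β : Type*}

/-- A matched point goes to its partner, an unmatched point to its own copy on the other side. -/
def sumSwap (f : α ≃. β) : α ⊕ β → β ⊕ α
  | .inl a => (f a).elim (.inr a) .inl
  | .inr b => (f.symm b).elim (.inl b) .inr

theorem sumSwap_symm_sumSwap (f : α ≃. β) (u : α ⊕ β) : f.symm.sumSwap (f.sumSwap u) = u := by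
  rcases u with a | b
  · cases h : f a with
    | none => simp [sumSwap, h]
    | some b => simp [sumSwap, h, f.eq_some_iff.2 h]
  · cases h : f.symm b with
    | none => simp [sumSwap, h]
    | some a => simp [sumSwap, h, f.eq_some_iff.1 h]

def sumSwapEquiv (f : α ≃. β) : α ⊕ β ≃ β ⊕ α where
  toFun := f.sumSwap
  invFun := f.symm.sumSwap
  left_inv := f.sumSwap_symm_sumSwap
  right_inv := f.symm.sumSwap_symm_sumSwap

end PEquiv

section PartialMatching

variable {α β : Type*}

open Classical in
noncomputable def Set.BijOn.toPEquiv {X X' : Finset α} {Y Y' : Finset β} {η : α → β}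
    (hX' : X' ⊆ X) (hY' : Y' ⊆ Y) (h : Set.BijOn η X' Y') : X ≃. Y where
  toFun x := if hx : x.1 ∈ X' then some ⟨η x, hY' (h.mapsTo hx)⟩ else none
  invFun y := if hy : y.1 ∈ Y' then
    some ⟨(h.surjOn hy).choose, hX' (h.surjOn hy).choose_spec.1⟩ else none
  inv x y := by
    constructor
    · simp only [Option.dite_none_right_eq_some, Option.some.injEq]
      rintro ⟨hy, rfl⟩
      obtain ⟨hx, hηx⟩ := (h.surjOn hy).choose_spec
      exact ⟨hx, Subtype.ext hηx⟩
    · simp only [Option.dite_none_right_eq_some, Option.some.injEq]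
      rintro ⟨hx, rfl⟩
      have hy : η x ∈ (Y' : Set β) := h.mapsTo hx
      obtain ⟨hx', hηx'⟩ := (h.surjOn hy).choose_spec
      exact ⟨hy, Subtype.ext (h.injOn hx' hx hηx')⟩

open Classical in
theorem exists_bijOn_of_sumEquiv {X Y : Finset α} (σ : X ⊕ Y ≃ Y ⊕ X) :
    ∃ (X' Y' : Finset α) (η : α → α), X' ⊆ X ∧ Y' ⊆ Y ∧ Set.BijOn η X' Y' ∧
      (∀ x : X, x.1 ∈ X' → ∃ y : Y, σ (.inl x) = .inl y ∧ η x = y) ∧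
      (∀ x : X, x.1 ∉ X' → ∃ x' : X, σ (.inl x) = .inr x') ∧
      (∀ y : Y, y.1 ∉ Y' → ∃ y' : Y, σ (.inr y') = .inl y) := by
  let η : α → α := fun z ↦
    if hz : z ∈ X then Sum.elim Subtype.val (fun _ ↦ z) (σ (.inl ⟨z, hz⟩)) else z
  have hη : ∀ (x : X) (y : Y), σ (.inl x) = .inl y → η x = y := by
    intro x y hxy
    simp [η, hxy]
  let X' := X.filter fun z ↦ ∃ hz : z ∈ X, (σ (.inl ⟨z, hz⟩)).isLeft
  have hX' : ∀ x : X, x.1 ∈ X' ↔ ∃ y : Y, σ (.inl x) = .inl y := by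
    intro x
    simp [X', Sum.isLeft_iff]
  have hinj : Set.InjOn η X' := by
    intro z₁ hz₁ z₂ hz₂ h
    lift z₁ to X using Finset.filter_subset _ _ hz₁
    lift z₂ to X using Finset.filter_subset _ _ hz₂
    obtain ⟨y₁, h₁⟩ := (hX' z₁).1 hz₁
    obtain ⟨y₂, h₂⟩ := (hX' z₂).1 hz₂
    obtain rfl : y₁ = y₂ := Subtype.ext ((hη _ _ h₁).symm.trans (h.trans (hη _ _ h₂)))
    exact congrArg Subtype.val (Sum.inl_injective (σ.injective (h₁.trans h₂.symm)))
  refine ⟨X', X'.image η, η, Finset.filter_subset _ _, ?_, ?_, ?_, ?_, ?_⟩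
  · intro y hy
    obtain ⟨z, hz, rfl⟩ := Finset.mem_image.1 hy
    lift z to X using Finset.filter_subset _ _ hz
    obtain ⟨y, h⟩ := (hX' z).1 hz
    rw [hη _ _ h]
    exact y.2
  · rw [Finset.coe_image]
    exact hinj.bijOn_image
  · intro x hx
    obtain ⟨y, hy⟩ := (hX' x).1 hx
    exact ⟨y, hy, hη x y hy⟩
  · intro x hx
    rcases h : σ (.inl x) with y | x'
    · exact absurd ((hX' x).2 ⟨y, h⟩) hx
    · exact ⟨x', rfl⟩
  · intro y hy
    rcases h : σ.symm (.inl y) with x | y'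
    · have hxy : σ (.inl x) = .inl y := by rw [← h, Equiv.apply_symm_apply]
      exact absurd (Finset.mem_image.2 ⟨x.1, (hX' x).2 ⟨y, hxy⟩, hη x y hxy⟩) hy
    · exact ⟨y', by rw [← h, Equiv.apply_symm_apply]⟩

end PartialMatching

theorem exists_isLeast_nonneg_forall_le {ι κ : Type*} [Finite ι] [Nonempty ι] [Finite κ]
    (c : ι → κ → ℝ) : ∃ d, IsLeast {lam : ℝ | 0 ≤ lam ∧ ∃ i, ∀ k, c i k ≤ lam} d := by
  set S := {lam : ℝ | 0 ≤ lam ∧ ∃ i, ∀ k, c i k ≤ lam}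
  have hS : S = ⋃ i, Set.Ici 0 ∩ ⋂ k, Set.Ici (c i k) := by
    ext lam
    simp [S]
  have hclosed : IsClosed S :=
    hS ▸ isClosed_iUnion_of_finite fun i ↦ isClosed_Ici.inter (isClosed_iInter fun _ ↦ isClosed_Ici)
  have hne : S.Nonempty := by
    obtain ⟨i⟩ := ‹Nonempty ι›
    obtain ⟨M, hM⟩ := Finite.bddAbove_range (c i)
    exact ⟨max 0 M, le_max_left _ _, i, fun k ↦ (hM ⟨k, rfl⟩).trans (le_max_right _ _)⟩
  exact ⟨sInf S, hclosed.isLeast_csInf hne ⟨0, fun _ h ↦ h.1⟩⟩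

theorem half_sub_le_norm_sub_diagProj (z w : ℝ × ℝ) : (z.2 - z.1) / 2 ≤ ‖z - diagProj w‖ := by
  have h₁ := neg_abs_le (z.1 - (w.1 + w.2) / 2)
  have h₂ := le_abs_self (z.2 - (w.1 + w.2) / 2)
  have : ‖z - diagProj w‖ = max |z.1 - (w.1 + w.2) / 2| |z.2 - (w.1 + w.2) / 2| := by
    simp [Prod.norm_def, diagProj]
  grind

theorem norm_sub_diagProj_self {z : ℝ × ℝ} (hz : z.1 ≤ z.2) :
    ‖z - diagProj z‖ = (z.2 - z.1) / 2 := by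
  rw [Prod.norm_def]
  simp only [diagProj, Prod.fst_sub, Prod.snd_sub, Real.norm_eq_abs]
  rw [abs_of_nonpos (by linarith), abs_of_nonneg (by linarith)]
  grind

/-- `d_B(G)` is the least element of this set. -/
def graphThresholds (X Y : Finset (ℝ × ℝ)) : Set ℝ :=
  {lam | 0 ≤ lam ∧ ∃ σ : ({x // x ∈ X} ⊕ {y // y ∈ Y}) ≃ ({y // y ∈ Y} ⊕ {x // x ∈ X}),
    ∀ u, bipCost X Y u (σ u) ≤ lam}

/-- `d_B(X, Y)` is the least element of this set. -/
def matchingThresholds (X Y : Finset (ℝ × ℝ)) : Set ℝ :=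
  {lam | 0 ≤ lam ∧ ∃ (X' Y' : Finset (ℝ × ℝ)) (η : ℝ × ℝ → ℝ × ℝ),
    X' ⊆ X ∧ Y' ⊆ Y ∧ Set.BijOn η ↑X' ↑Y' ∧ (∀ x ∈ X', ‖x - η x‖ ≤ lam) ∧
    (∀ z ∈ (X \ X') ∪ (Y \ Y'), (z.2 - z.1) / 2 ≤ lam)}

theorem graphThresholds_subset_matchingThresholds (X Y : Finset (ℝ × ℝ)) :
    graphThresholds X Y ⊆ matchingThresholds X Y := by
  rintro lam ⟨h0, σ, hσ⟩
  obtain ⟨X', Y', η, hX', hY', hbij, hmatched, hunX, hunY⟩ := exists_bijOn_of_sumEquiv σ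
  refine ⟨h0, X', Y', η, hX', hY', hbij, fun z hz ↦ ?_, fun z hz ↦ ?_⟩
  · lift z to X using hX' hz
    obtain ⟨y, hσz, hηz⟩ := hmatched z hz
    simpa [hσz, bipCost, hηz] using hσ (.inl z)
  · rcases Finset.mem_union.1 hz with hz | hz
    · obtain ⟨hzX, hz'⟩ := Finset.mem_sdiff.1 hz
      lift z to X using hzX
      obtain ⟨x', hx'⟩ := hunX z hz'
      have hcost := hσ (.inl z)
      rw [hx'] at hcost
      exact (half_sub_le_norm_sub_diagProj _ _).trans hcost
    · obtain ⟨hzY, hz'⟩ := Finset.mem_sdiff.1 hz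
      lift z to Y using hzY
      obtain ⟨y', hy'⟩ := hunY z hz'
      have hcost := hσ (.inr y')
      rw [hy', bipCost, norm_sub_rev] at hcost
      exact (half_sub_le_norm_sub_diagProj _ _).trans hcost

theorem matchingThresholds_subset_graphThresholds {X Y : Finset (ℝ × ℝ)}
    (hX : ∀ z ∈ X, z.1 ≤ z.2) (hY : ∀ z ∈ Y, z.1 ≤ z.2) :
    matchingThresholds X Y ⊆ graphThresholds X Y := by
  rintro lam ⟨h0, X', Y', η, hX', hY', hbij, hmatched, hunmatched⟩
  refine ⟨h0, (hbij.toPEquiv hX' hY').sumSwapEquiv, ?_⟩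
  rintro (x | y)
  · by_cases hx : x.1 ∈ X'
    · simpa [PEquiv.sumSwapEquiv, PEquiv.sumSwap, Set.BijOn.toPEquiv, hx, bipCost]
        using hmatched x hx
    · simpa [PEquiv.sumSwapEquiv, PEquiv.sumSwap, Set.BijOn.toPEquiv, hx, bipCost,
        norm_sub_diagProj_self (hX x x.2)] using hunmatched x (by simp [hx])
  · by_cases hy : y.1 ∈ Y'
    · simpa [PEquiv.sumSwapEquiv, PEquiv.sumSwap, Set.BijOn.toPEquiv, PEquiv.symm, hy,
        bipCost] using h0
    · simpa [PEquiv.sumSwapEquiv, PEquiv.sumSwap, Set.BijOn.toPEquiv, PEquiv.symm, hy,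
        bipCost, norm_sub_rev, norm_sub_diagProj_self (hY y y.2)] using hunmatched y (by simp [hy])

theorem exists_isLeast_graphThresholds (X Y : Finset (ℝ × ℝ)) :
    ∃ d, IsLeast (graphThresholds X Y) d :=
  have : Nonempty (({x // x ∈ X} ⊕ {y // y ∈ Y}) ≃ ({y // y ∈ Y} ⊕ {x // x ∈ X})) :=
    ⟨Equiv.sumComm _ _⟩
  exists_isLeast_nonneg_forall_le (ι := _ ≃ _) fun σ u ↦ bipCost X Y u (σ u)

/-- Reduction Lemma. For finite sets `X, Y` of points of `ℝ²` strictly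
above the diagonal, the bottleneck cost of the complete bipartite graph on
`U ⊔ V = (X ⊔ Ȳ) ⊔ (Y ⊔ X̄)` (the least `λ ≥ 0` such that the edges of cost at most `λ`
contain a perfect matching, i.e. there is a bijection `U ≃ V` all of whose pairs have cost
at most `λ`) equals the bottleneck distance `d_B(X, Y)` (the least `λ ≥ 0` achievable as the
cost of a partial matching `η : X ⇌ Y`). -/
theorem stmt7 (X Y : Finset (ℝ × ℝ))
    (hX : ∀ z ∈ X, z.1 < z.2) (hY : ∀ z ∈ Y, z.1 < z.2) :
    ∃ d : ℝ,
      IsLeast {lam : ℝ | 0 ≤ lam ∧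
        ∃ σ : ({x // x ∈ X} ⊕ {y // y ∈ Y}) ≃ ({y // y ∈ Y} ⊕ {x // x ∈ X}),
          ∀ u, bipCost X Y u (σ u) ≤ lam} d ∧
      IsLeast {lam : ℝ | 0 ≤ lam ∧
        ∃ (X' Y' : Finset (ℝ × ℝ)) (η : ℝ × ℝ → ℝ × ℝ),
          X' ⊆ X ∧ Y' ⊆ Y ∧ Set.BijOn η ↑X' ↑Y' ∧
          (∀ x ∈ X', ‖x - η x‖ ≤ lam) ∧
          (∀ z ∈ (X \ X') ∪ (Y \ Y'), (z.2 - z.1) / 2 ≤ lam)} d := by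
  obtain ⟨d, hd⟩ := exists_isLeast_graphThresholds X Y
  have hsets : graphThresholds X Y = matchingThresholds X Y :=
    (graphThresholds_subset_matchingThresholds X Y).antisymm
      (matchingThresholds_subset_graphThresholds (fun z hz ↦ (hX z hz).le)
        fun z hz ↦ (hY z hz).le)
  exact ⟨d, hd, (hsets ▸ hd : IsLeast (matchingThresholds X Y) d)⟩
end

section
/- Let v ∈ ℝ² and let N ⊂ ℝ² be a finite set. Then the set of directions I_v = { ω ∈ ℝ² : ‖ω‖ = 1 and ⟨u − v, ω⟩ > 0 for all u ∈ N } is a connected subset of the unit circle (possibly empty). -/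
open scoped RealInnerProductSpace

/-!
Radial projection `x ↦ ‖x‖⁻¹ • x` maps the open convex cone `{ω | ∀ u ∈ N, 0 < ⟪u - v, ω⟫}`
onto `I_v`. When `N` is nonempty this cone misses `0`, so the projection is continuous on it and
`I_v` is the continuous image of a convex set; when `N` is empty, `I_v` is the whole circle.
-/

open Metric

section

variable {E : Type*} [NormedAddCommGroup E]

theorem Convex.isPreconnected_sphere_inter [NormedSpace ℝ E] {K : Set E} (hK : Convex ℝ K)
    (h0 : (0 : E) ∉ K) (hsmul : ∀ x ∈ K, ∀ c : ℝ, 0 < c → c • x ∈ K) :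
    IsPreconnected (sphere (0 : E) 1 ∩ K) := by
  have hne : ∀ x ∈ K, x ≠ 0 := fun x hx h => h0 (h ▸ hx)
  have himage : sphere (0 : E) 1 ∩ K = (fun x => ‖x‖⁻¹ • x) '' K := by
    ext x
    constructor
    · rintro ⟨hx1, hxK⟩
      exact ⟨x, hxK, by simp [mem_sphere_zero_iff_norm.1 hx1]⟩
    · rintro ⟨x, hxK, rfl⟩
      exact ⟨mem_sphere_zero_iff_norm.2 (norm_smul_inv_norm (hne x hxK)),
        hsmul x hxK _ (inv_pos.2 (norm_pos_iff.2 (hne x hxK)))⟩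
  rw [himage]
  refine hK.isPreconnected.image _ fun x hx => ?_
  exact ((continuous_norm.continuousAt.inv₀ (norm_ne_zero_iff.2 (hne x hx))).smul
    continuousAt_id).continuousWithinAt

variable [InnerProductSpace ℝ E]

theorem convex_setOf_forall_inner_pos (S : Set E) : Convex ℝ {ω : E | ∀ a ∈ S, 0 < ⟪a, ω⟫} := by
  simp only [Set.ofPred_forall]
  exact convex_iInter₂ fun a _ => convex_halfSpace_gt (innerₛₗ ℝ a).isLinear 0

theorem isPreconnected_sphere_inter_setOf_forall_inner_pos (hE : 1 < Module.rank ℝ E)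
    (S : Set E) : IsPreconnected (sphere (0 : E) 1 ∩ {ω | ∀ a ∈ S, 0 < ⟪a, ω⟫}) := by
  rcases S.eq_empty_or_nonempty with rfl | ⟨a, ha⟩
  · simpa using (isConnected_sphere hE (0 : E) zero_le_one).isPreconnected
  refine (convex_setOf_forall_inner_pos S).isPreconnected_sphere_inter (fun h0 => ?_)
    fun ω hω c hc a ha => ?_
  · simpa using h0 a ha
  · simpa [real_inner_smul_right] using mul_pos hc (hω a ha)

end

theorem stmt13_general (v : EuclideanSpace ℝ (Fin 2)) (N : Set (EuclideanSpace ℝ (Fin 2))) :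
    IsPreconnected {ω : EuclideanSpace ℝ (Fin 2) | ‖ω‖ = 1 ∧ ∀ u ∈ N, 0 < ⟪u - v, ω⟫} := by
  have hrank : 1 < Module.rank ℝ (EuclideanSpace ℝ (Fin 2)) := by
    rw [← Module.finrank_eq_rank, finrank_euclideanSpace_fin]
    norm_num
  have hset : {ω : EuclideanSpace ℝ (Fin 2) | ‖ω‖ = 1 ∧ ∀ u ∈ N, 0 < ⟪u - v, ω⟫} =
      sphere 0 1 ∩ {ω | ∀ a ∈ (· - v) '' N, 0 < ⟪a, ω⟫} := by
    ext ω
    simp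
  rw [hset]
  exact isPreconnected_sphere_inter_setOf_forall_inner_pos hrank _

/-- For `v ∈ ℝ²` and a finite set `N ⊂ ℝ²`, the set of unit directions
`I_v = {ω : ‖ω‖ = 1 ∧ ∀ u ∈ N, ⟨u − v, ω⟩ > 0}` is a connected (possibly empty) subset of
the unit circle. -/
theorem stmt13 (v : EuclideanSpace ℝ (Fin 2)) (N : Set (EuclideanSpace ℝ (Fin 2)))
    (hN : N.Finite) :
    IsPreconnected {ω : EuclideanSpace ℝ (Fin 2) | ‖ω‖ = 1 ∧ ∀ u ∈ N, 0 < ⟪u - v, ω⟫} :=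
  stmt13_general v N
end
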